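/- arXiv:2408.01529 — 6 statements merged into one kernel-verified Lean document; each statement's English description precedes it below -/
import Mathlib

section
/- The restriction of the function α ↦ |cos(π²/(2α))| to the set of obtuse angles (π/2, π) is injective. -/
open Real

/-- The map `α ↦ |cos(π²/(2α))|` is injective on the set of obtuse angles `(π/2, π)`. -/
theorem abs_c_injOn_obtuse :
    Set.InjOn (fun α : ℝ => |Real.cos (π ^ 2 / (2 * α))|) (Set.Ioo (π / 2) π) := by
  have hπ := Real.pi_pos
  have key : ∀ α ∈ Set.Ioo (π / 2) π, π ^ 2 / (2 * α) ∈ Set.Ioo (π / 2) π := by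
    rintro α ⟨h1, h2⟩
    have hα : 0 < α := lt_trans (by linarith) h1
    constructor
    · rw [div_lt_div_iff₀ (by norm_num : (0:ℝ) < 2) (by linarith : (0:ℝ) < 2 * α)]
      nlinarith
    · rw [div_lt_iff₀ (by linarith : (0:ℝ) < 2 * α)]
      nlinarith
  have anti : StrictAntiOn (fun α : ℝ => |Real.cos (π ^ 2 / (2 * α))|)
      (Set.Ioo (π / 2) π) := by
    intro a ha b hb hab
    have hka := key a ha
    have hkb := key b hb
    have hxb : π ^ 2 / (2 * b) < π ^ 2 / (2 * a) := by
      apply div_lt_div_of_pos_left (by positivity) (by linarith [ha.1])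
      linarith
    have hmem : ∀ x ∈ Set.Ioo (π / 2) π, x ∈ Set.Icc 0 π := fun x hx =>
      ⟨by linarith [hx.1], le_of_lt hx.2⟩
    have hcos : Real.cos (π ^ 2 / (2 * a)) < Real.cos (π ^ 2 / (2 * b)) :=
      Real.strictAntiOn_cos (hmem _ hkb) (hmem _ hka) hxb
    have hna : Real.cos (π ^ 2 / (2 * a)) < 0 :=
      Real.cos_neg_of_pi_div_two_lt_of_lt hka.1 (by linarith [hka.2])
    have hnb : Real.cos (π ^ 2 / (2 * b)) < 0 :=
      Real.cos_neg_of_pi_div_two_lt_of_lt hkb.1 (by linarith [hkb.2])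
    simp only [abs_of_neg hna, abs_of_neg hnb]
    linarith
  exact anti.injOn
end

section
/- A convex polygon with n ≥ 3 vertices has at most three interior angles of the form π/(2k+1) with k ∈ ℤ⁺, and if it has exactly three such angles then n = 3 and all angles equal π/3 (i.e., it is an equilateral triangle). -/
open Real

/-- A convex polygon with `n ≥ 3` vertices (interior angles in `(0,π)` summing to
`(n-2)π`) has at most three odd interior angles, i.e. angles of the form `π/(2k+1)`
with `k ∈ ℤ⁺`; if it has exactly three such angles, then `n = 3` and all angles
equal `π/3` (an equilateral triangle). -/
theorem at_most_three_odd_angles (n : ℕ) (hn : 3 ≤ n) (α : Fin n → ℝ)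
    (hmem : ∀ j, α j ∈ Set.Ioo 0 π) (hsum : ∑ j, α j = ((n : ℝ) - 2) * π) :
    {j : Fin n | ∃ k : ℕ, 0 < k ∧ α j = π / (2 * k + 1)}.ncard ≤ 3 ∧
    ({j : Fin n | ∃ k : ℕ, 0 < k ∧ α j = π / (2 * k + 1)}.ncard = 3 →
      n = 3 ∧ ∀ j, α j = π / 3) := by
  classical
  set S := {j : Fin n | ∃ k : ℕ, 0 < k ∧ α j = π / (2 * k + 1)} with hS
  set T : Finset (Fin n) := Finset.univ.filter (fun j => j ∈ S) with hT
  have hncard : S.ncard = T.card := by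
    rw [Set.ncard_eq_toFinset_card' S]
    congr 1
    ext j
    simp [hT, Set.mem_toFinset]
  have hle3 : ∀ j ∈ T, α j ≤ π / 3 := by
    intro j hj
    rw [hT, Finset.mem_filter] at hj
    obtain ⟨k, hk, he⟩ := hj.2
    rw [he]
    have hk1 : (1 : ℝ) ≤ (k : ℝ) := by exact_mod_cast hk
    have h3 : (3 : ℝ) ≤ 2 * (k : ℝ) + 1 := by linarith
    exact div_le_div_of_nonneg_left pi_pos.le (by norm_num) h3
  have hcards : T.card + Tᶜ.card = n := by
    rw [Finset.card_add_card_compl]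
    simp
  have h1 : ∑ j ∈ T, α j ≤ (T.card : ℝ) * (π / 3) := by
    have := Finset.sum_le_card_nsmul T α (π / 3) hle3
    simpa [nsmul_eq_mul] using this
  have h2 : ∑ j ∈ Tᶜ, α j ≤ (Tᶜ.card : ℝ) * π := by
    have := Finset.sum_le_card_nsmul Tᶜ α π (fun j _ => (hmem j).2.le)
    simpa [nsmul_eq_mul] using this
  have hsplit : (∑ j ∈ T, α j) + (∑ j ∈ Tᶜ, α j) = ((n : ℝ) - 2) * π := by
    rw [Finset.sum_add_sum_compl, hsum]
  have hcR : (Tᶜ.card : ℝ) = (n : ℝ) - (T.card : ℝ) := by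
    have h := hcards
    have : ((T.card : ℝ) + (Tᶜ.card : ℝ)) = (n : ℝ) := by exact_mod_cast h
    linarith
  have hmle : T.card ≤ 3 := by
    by_contra h
    push_neg at h
    have hm : (4 : ℝ) ≤ (T.card : ℝ) := by exact_mod_cast h
    nlinarith [pi_pos, h1, h2, hsplit, hcR]
  constructor
  · rw [hncard]; exact hmle
  · intro hm3
    rw [hncard] at hm3
    -- show Tᶜ is empty
    have hcompl : Tᶜ = ∅ := by
      by_contra hne
      have hne' : Tᶜ.Nonempty := Finset.nonempty_of_ne_empty hne
      have hlt : ∑ j ∈ Tᶜ, α j < (Tᶜ.card : ℝ) * π := by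
        have := Finset.sum_lt_sum_of_nonempty hne' (fun j _ => (hmem j).2)
        simpa [Finset.sum_const, nsmul_eq_mul] using this
      have hm : (T.card : ℝ) = 3 := by exact_mod_cast hm3
      nlinarith [pi_pos, h1, hlt, hsplit, hcR]
    have hTuniv : T = Finset.univ := by
      rwa [← Finset.compl_eq_empty_iff]
    have hn3 : n = 3 := by
      have := hcards
      rw [hcompl, Finset.card_empty, hm3] at this
      omega
    refine ⟨hn3, fun j => ?_⟩
    have hmemT : ∀ j, j ∈ T := fun j => hTuniv ▸ Finset.mem_univ j
    have hub : ∀ j, α j ≤ π / 3 := fun j => hle3 j (hmemT j)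
    by_contra hne
    have hlt : α j < π / 3 := lt_of_le_of_ne (hub j) hne
    have hsum' : ∑ i, α i = π := by
      rw [hsum, hn3]; norm_num
    have hslt : ∑ i, α i < ∑ _i : Fin n, (π / 3 : ℝ) :=
      Finset.sum_lt_sum (fun i _ => hub i) ⟨j, Finset.mem_univ j, hlt⟩
    rw [hsum', Finset.sum_const, Finset.card_univ, Fintype.card_fin, hn3] at hslt
    have : π < π := by
      calc π < (3 : ℕ) • (π / 3) := hslt
        _ = π := by simp [nsmul_eq_mul]; ring
    exact lt_irrefl _ this
end

section
/- A convex polygon with n ≥ 3 vertices that is not a rectangle has at most three interior angles of the form π/(2k) with k ∈ ℤ⁺. -/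
open Real

/-- A convex polygon with `n ≥ 3` vertices (interior angles in `(0,π)` summing to
`(n-2)π`) that is not a rectangle has at most three even interior angles, i.e.
angles of the form `π/(2k)` with `k ∈ ℤ⁺`. -/
theorem at_most_three_even_angles (n : ℕ) (hn : 3 ≤ n) (α : Fin n → ℝ)
    (hmem : ∀ j, α j ∈ Set.Ioo 0 π) (hsum : ∑ j, α j = ((n : ℝ) - 2) * π)
    (hrect : ¬ (n = 4 ∧ ∀ j, α j = π / 2)) :
    {j : Fin n | ∃ k : ℕ, 0 < k ∧ α j = π / (2 * k)}.ncard ≤ 3 := by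
  classical
  by_contra h
  push_neg at h
  set T : Finset (Fin n) :=
    Finset.univ.filter (fun j => ∃ k : ℕ, 0 < k ∧ α j = π / (2 * k)) with hT
  have hset : {j : Fin n | ∃ k : ℕ, 0 < k ∧ α j = π / (2 * k)} = ↑T := by
    ext j; simp [hT]
  rw [hset, Set.ncard_coe_finset] at h
  have hc4 : 4 ≤ T.card := h
  have hle : ∀ j ∈ T, α j ≤ π / 2 := by
    intro j hj
    simp only [hT, Finset.mem_filter] at hj
    obtain ⟨-, k, hk, hαk⟩ := hj
    rw [hαk]
    apply div_le_div_of_nonneg_left pi_pos.le two_pos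
    have : (1 : ℝ) ≤ k := by exact_mod_cast hk
    linarith
  have hsplit : ∑ j ∈ T, α j + ∑ j ∈ Tᶜ, α j = ∑ j, α j :=
    Finset.sum_add_sum_compl T α
  have hsumT : ∑ j ∈ T, α j ≤ (T.card : ℝ) * (π / 2) := by
    calc ∑ j ∈ T, α j ≤ T.card • (π / 2) := Finset.sum_le_card_nsmul T α _ hle
    _ = (T.card : ℝ) * (π / 2) := by rw [nsmul_eq_mul]
  have hcard : T.card + Tᶜ.card = n := by
    rw [Finset.card_add_card_compl]; simp
  rcases Tᶜ.eq_empty_or_nonempty with hemp | hne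
  · -- all angles are even; T = univ, so card = n
    have hTuniv : T = Finset.univ := by
      rwa [Finset.compl_eq_empty_iff] at hemp
    have hcn : T.card = n := by rw [hTuniv, Finset.card_univ, Fintype.card_fin]
    have hple : ((n : ℝ) - 2) * π ≤ (n : ℝ) * (π / 2) := by
      have h1 := hsumT
      rw [hcn, hTuniv] at h1
      calc ((n : ℝ) - 2) * π = ∑ j, α j := hsum.symm
      _ ≤ _ := h1
    have hn4 : n ≤ 4 := by
      by_contra hn4
      push_neg at hn4
      have : (5 : ℝ) ≤ n := by exact_mod_cast hn4
      nlinarith [pi_pos]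
    have hn4' : n = 4 := le_antisymm hn4 (hcn ▸ hc4)
    apply hrect
    refine ⟨hn4', fun j => ?_⟩
    by_contra hj
    have hle' : ∀ i ∈ Finset.univ, α i ≤ π / 2 :=
      fun i _ => hle i (hTuniv ▸ Finset.mem_univ i)
    have hlt : ∑ i, α i < ∑ _i : Fin n, (π / 2) :=
      Finset.sum_lt_sum hle'
        ⟨j, Finset.mem_univ j, lt_of_le_of_ne (hle' j (Finset.mem_univ j)) hj⟩
    rw [hsum, Finset.sum_const, Finset.card_univ, Fintype.card_fin, nsmul_eq_mul] at hlt
    have hnr : (n : ℝ) = 4 := by rw [hn4']; norm_num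
    rw [hnr] at hlt
    linarith
  · have hsumC : ∑ j ∈ Tᶜ, α j < (Tᶜ.card : ℝ) * π := by
      calc ∑ j ∈ Tᶜ, α j < ∑ _j ∈ Tᶜ, π :=
        Finset.sum_lt_sum_of_nonempty hne (fun j _ => (hmem j).2)
      _ = (Tᶜ.card : ℝ) * π := by rw [Finset.sum_const, nsmul_eq_mul]
    have hcR : (T.card : ℝ) + (Tᶜ.card : ℝ) = n := by exact_mod_cast hcard
    have hcR4 : (4 : ℝ) ≤ (T.card : ℝ) := by exact_mod_cast hc4
    nlinarith [pi_pos, hsum, hsplit, hsumT, hsumC]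
end

section
/- Let T be a triangle with perimeter 1, side lengths A ≤ B ≤ C, and let α be the interior angle opposite the shortest side A. Then B > 1/4 and C > 1/4, and α ≤ π/3, so that the closed disk sector of radius L = (√3)/8 and opening angle α centered at the vertex of angle α is contained in T and meets ∂T only along the two straight radial edges of the sector. -/
open Real EuclideanGeometry

/-!
Put `u = q - p`, `v = r - p`. Since `A` is the shortest side, `A² ≤ BC`, so the law of cosines
gives `2⟪u, v⟫ = B² + C² - A² ≥ BC`, i.e. `cos α ≥ 1/2`. Then
`‖s • u + t • v‖² ≥ s²C² + stBC + t²B² ≥ (3/4)(sC + tB)²` for `s, t ≥ 0`, and `B, C > 1/4` by the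
strict triangle inequality, so a point `p + s • u + t • v` of the sector with `s + t ≥ 1` lies
farther than `√3/8` from `p`. The points of the sector in the ball therefore have barycentric
coordinates `(1 - s - t, s, t)` with `1 - s - t > 0`: they lie in `T`, and in its interior unless
`s = 0` or `t = 0`.
-/

open scoped RealInnerProductSpace

section InnerProductSpace

variable {F : Type*} [NormedAddCommGroup F] [InnerProductSpace ℝ F]

theorem norm_mul_norm_le_two_mul_inner_of_norm_sub_le {u v : F}
    (hu : ‖u - v‖ ≤ ‖u‖) (hv : ‖u - v‖ ≤ ‖v‖) : ‖u‖ * ‖v‖ ≤ 2 * ⟪u, v⟫ := by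
  have hcos := norm_sub_sq_real u v
  have hsq : ‖u - v‖ ^ 2 ≤ ‖u‖ * ‖v‖ := by
    rw [sq]; exact mul_le_mul hu hv (norm_nonneg _) (norm_nonneg _)
  nlinarith [sq_nonneg (‖u‖ - ‖v‖)]

theorem angle_le_pi_div_three_of_norm_mul_norm_le_two_mul_inner {u v : F}
    (hu : u ≠ 0) (hv : v ≠ 0) (huv : ‖u‖ * ‖v‖ ≤ 2 * ⟪u, v⟫) :
    InnerProductGeometry.angle u v ≤ π / 3 := by
  have hcos : cos (π / 3) ≤ ⟪u, v⟫ / (‖u‖ * ‖v‖) := by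
    rw [cos_pi_div_three, le_div_iff₀ (by positivity)]
    linarith
  calc InnerProductGeometry.angle u v = arccos (⟪u, v⟫ / (‖u‖ * ‖v‖)) := rfl
    _ ≤ arccos (cos (π / 3)) := arccos_le_arccos hcos
    _ = π / 3 := arccos_cos (by positivity) (by linarith [pi_pos])

theorem three_mul_sq_le_four_mul_norm_smul_add_smul_sq {u v : F} {s t : ℝ}
    (huv : ‖u‖ * ‖v‖ ≤ 2 * ⟪u, v⟫) (hs : 0 ≤ s) (ht : 0 ≤ t) :
    3 * (s * ‖u‖ + t * ‖v‖) ^ 2 ≤ 4 * ‖s • u + t • v‖ ^ 2 := by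
  rw [norm_add_sq_real, norm_smul, norm_smul, real_inner_smul_left, real_inner_smul_right,
    norm_of_nonneg hs, norm_of_nonneg ht]
  nlinarith [mul_le_mul_of_nonneg_left huv (mul_nonneg hs ht), sq_nonneg (s * ‖u‖ - t * ‖v‖)]

theorem add_lt_one_of_norm_smul_add_smul_le {u v : F} {s t : ℝ}
    (huv : ‖u‖ * ‖v‖ ≤ 2 * ⟪u, v⟫) (hu : 1 / 4 < ‖u‖) (hv : 1 / 4 < ‖v‖)
    (hs : 0 ≤ s) (ht : 0 ≤ t) (hL : ‖s • u + t • v‖ ≤ √3 / 8) : s + t < 1 := by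
  by_contra! hst
  have hlong : 1 / 4 < s * ‖u‖ + t * ‖v‖ := by
    have hmin : 1 / 4 < min ‖u‖ ‖v‖ := lt_min hu hv
    nlinarith [mul_le_mul_of_nonneg_left (min_le_left ‖u‖ ‖v‖) hs,
      mul_le_mul_of_nonneg_left (min_le_right ‖u‖ ‖v‖) ht]
  have hshort : ‖s • u + t • v‖ ^ 2 ≤ 3 / 64 := by
    calc ‖s • u + t • v‖ ^ 2 ≤ (√3 / 8) ^ 2 := by gcongr
      _ = 3 / 64 := by rw [div_pow, sq_sqrt zero_le_three]; norm_num
  nlinarith [three_mul_sq_le_four_mul_norm_smul_add_smul_sq huv hs ht]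

end InnerProductSpace

theorem dist_lt_dist_add_dist_of_not_collinear {V P : Type*} [NormedAddCommGroup V]
    [NormedSpace ℝ V] [StrictConvexSpace ℝ V] [MetricSpace P] [NormedAddTorsor V P] {p q r : P}
    (h : ¬ Collinear ℝ {p, q, r}) : dist p q < dist p r + dist r q := by
  refine dist_lt_dist_add_dist_iff.2 fun hbtw ↦ h ?_
  rw [Set.pair_comm]
  exact hbtw.collinear

section Triangle

theorem sum_triangle_weights {k : Type*} [CommRing k] (s t : k) :
    ∑ i, ![1 - s - t, s, t] i = 1 := by
  simp only [Fin.sum_univ_three, Matrix.cons_val]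
  ring

theorem affineCombination_triangle_weights {k V : Type*} [CommRing k] [AddCommGroup V]
    [Module k V] (p q r : V) (s t : k) :
    Finset.univ.affineCombination k ![p, q, r] ![1 - s - t, s, t] =
      p + s • (q - p) + t • (r - p) := by
  rw [Finset.affineCombination_eq_linear_combination _ _ _ (sum_triangle_weights s t)]
  simp only [Fin.sum_univ_three, Matrix.cons_val]
  module

theorem range_vecThree {α : Type*} (a b c : α) : Set.range ![a, b, c] = {a, b, c} := by
  simp only [Matrix.range_cons, Matrix.range_empty, Set.union_empty, Set.singleton_union]

variable {E : Type*} {p q r : E} {s t : ℝ}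

theorem add_smul_sub_add_smul_sub_mem_convexHull [AddCommGroup E] [Module ℝ E]
    (hs : 0 ≤ s) (ht : 0 ≤ t) (hst : s + t ≤ 1) :
    p + s • (q - p) + t • (r - p) ∈ convexHull ℝ {p, q, r} := by
  rw [← affineCombination_triangle_weights, ← range_vecThree]
  refine affineCombination_mem_convexHull (fun i _ ↦ ?_) (sum_triangle_weights s t)
  fin_cases i <;> simp <;> linarith

variable [NormedAddCommGroup E] [NormedSpace ℝ E]

theorem add_smul_sub_add_smul_sub_mem_interior_convexHull
    (hind : AffineIndependent ℝ ![p, q, r]) (hdim : Module.finrank ℝ E = 2)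
    (hs : 0 < s) (ht : 0 < t) (hst : s + t < 1) :
    p + s • (q - p) + t • (r - p) ∈ interior (convexHull ℝ {p, q, r}) := by
  have := Module.finite_of_finrank_eq_succ hdim
  have hspan : affineSpan ℝ (Set.range ![p, q, r]) = ⊤ := by
    rw [hind.affineSpan_eq_top_iff_card_eq_finrank_add_one, hdim]
    simp
  let b : AffineBasis (Fin 3) ℝ E := ⟨![p, q, r], hind, hspan⟩
  rw [← affineCombination_triangle_weights, ← range_vecThree]
  change Finset.univ.affineCombination ℝ b _ ∈ interior (convexHull ℝ (Set.range b))
  rw [b.interior_convexHull]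
  intro i
  rw [b.coord_apply_combination_of_mem (Finset.mem_univ i) (sum_triangle_weights s t)]
  fin_cases i <;> simp <;> linarith

theorem add_smul_sub_add_smul_sub_mem_segment_of_mem_frontier_convexHull
    (hind : AffineIndependent ℝ ![p, q, r]) (hdim : Module.finrank ℝ E = 2)
    (hs : 0 ≤ s) (ht : 0 ≤ t) (hst : s + t < 1)
    (hx : p + s • (q - p) + t • (r - p) ∈ frontier (convexHull ℝ {p, q, r})) :
    p + s • (q - p) + t • (r - p) ∈ segment ℝ p q ∪ segment ℝ p r := by
  rw [segment_eq_image', segment_eq_image']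
  rcases ht.eq_or_lt with rfl | ht
  · exact Or.inl ⟨s, ⟨hs, by linarith⟩, by simp⟩
  rcases hs.eq_or_lt with rfl | hs
  · exact Or.inr ⟨t, ⟨ht.le, by linarith⟩, by simp⟩
  exact absurd (add_smul_sub_add_smul_sub_mem_interior_convexHull hind hdim hs ht hst) hx.2

end Triangle

/-- Let `T` be a triangle with vertices `p, q, r`, perimeter 1, side lengths
`A = |qr| ≤ B = |pr| ≤ C = |pq|`, and let `α` be the interior angle at `p`
(opposite the shortest side `A`). Then `B > 1/4`, `C > 1/4`, `α ≤ π/3`, and the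
closed disk sector of radius `L = √3/8` and opening angle `α` centered at `p`
(the intersection of the closed ball with the cone at `p` spanned by the two
adjacent sides) is contained in `T` and meets the boundary of `T` only along the
two straight radial edges of the sector. -/
theorem triangle_sector_fits (p q r : EuclideanSpace ℝ (Fin 2))
    (hcol : ¬ Collinear ℝ ({p, q, r} : Set (EuclideanSpace ℝ (Fin 2))))
    (A B C α : ℝ) (hA : A = dist q r) (hB : B = dist p r) (hC : C = dist p q)
    (hAB : A ≤ B) (hBC : B ≤ C) (hper : A + B + C = 1)
    (hα : α = EuclideanGeometry.angle q p r) :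
    1 / 4 < B ∧ 1 / 4 < C ∧ α ≤ π / 3 ∧
    (Metric.closedBall p (Real.sqrt 3 / 8) ∩
        {x | ∃ s t : ℝ, 0 ≤ s ∧ 0 ≤ t ∧ x = p + s • (q - p) + t • (r - p)})
      ⊆ convexHull ℝ ({p, q, r} : Set (EuclideanSpace ℝ (Fin 2))) ∧
    (Metric.closedBall p (Real.sqrt 3 / 8) ∩
        {x | ∃ s t : ℝ, 0 ≤ s ∧ 0 ≤ t ∧ x = p + s • (q - p) + t • (r - p)} ∩
        frontier (convexHull ℝ ({p, q, r} : Set (EuclideanSpace ℝ (Fin 2)))))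
      ⊆ segment ℝ p q ∪ segment ℝ p r := by
  have htri : C < A + B := by
    rw [hA, hB, hC, dist_comm q r, add_comm]
    exact dist_lt_dist_add_dist_of_not_collinear hcol
  have hB4 : 1 / 4 < B := by linarith
  have hC4 : 1 / 4 < C := by linarith
  have hu : ‖q - p‖ = C := by rw [hC, dist_comm, dist_eq_norm]
  have hv : ‖r - p‖ = B := by rw [hB, dist_comm, dist_eq_norm]
  have huv : ‖(q - p) - (r - p)‖ = A := by rw [sub_sub_sub_cancel_right, hA, dist_eq_norm]
  have hinner : ‖q - p‖ * ‖r - p‖ ≤ 2 * ⟪q - p, r - p⟫ :=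
    norm_mul_norm_le_two_mul_inner_of_norm_sub_le (by linarith) (by linarith)
  have hsector : ∀ x ∈ Metric.closedBall p (√3 / 8) ∩
      {x | ∃ s t : ℝ, 0 ≤ s ∧ 0 ≤ t ∧ x = p + s • (q - p) + t • (r - p)},
      ∃ s t : ℝ, 0 ≤ s ∧ 0 ≤ t ∧ s + t < 1 ∧ x = p + s • (q - p) + t • (r - p) := by
    rintro x ⟨hx, s, t, hs, ht, rfl⟩
    refine ⟨s, t, hs, ht, add_lt_one_of_norm_smul_add_smul_le hinner (by linarith)
      (by linarith) hs ht ?_, rfl⟩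
    rwa [Metric.mem_closedBall, dist_eq_norm, add_assoc, add_sub_cancel_left] at hx
  refine ⟨hB4, hC4, ?_, ?_, ?_⟩
  · rw [hα]
    exact angle_le_pi_div_three_of_norm_mul_norm_le_two_mul_inner (u := q - p) (v := r - p)
      (norm_pos_iff.1 (by linarith)) (norm_pos_iff.1 (by linarith)) hinner
  · intro x hx
    obtain ⟨s, t, hs, ht, hst, rfl⟩ := hsector x hx
    exact add_smul_sub_add_smul_sub_mem_convexHull hs ht hst.le
  · rintro x ⟨hx, hfr⟩
    obtain ⟨s, t, hs, ht, hst, rfl⟩ := hsector x hx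
    exact add_smul_sub_add_smul_sub_mem_segment_of_mem_frontier_convexHull
      (affineIndependent_iff_not_collinear_set.2 hcol) finrank_euclideanSpace_fin hs ht hst hfr
end

section
/- Let T be an isosceles triangle of perimeter 1 whose two equal base angles have measure α ≤ π/3, with equal sides of length A = 1/(2(1+cos α)). Then L := A cos α = cos(α)/(2(1+cos α)) satisfies L ≥ 1/6, and the two disk sectors of radius L and opening angle α centered at the two base vertices intersect only at the midpoint of the base. -/
open Real EuclideanGeometry

/-- Let `T` be an isosceles triangle of perimeter 1 with apex `a` and base vertices
`b₁, b₂`, equal base angles `α ≤ π/3`, and equal sides of length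
`A = 1/(2(1+cos α))`. Then `L = A cos α = cos α/(2(1+cos α)) ≥ 1/6`, and the two
disk sectors of radius `L` centered at the base vertices (the intersections of the
closed balls with the triangle) intersect only at the midpoint of the base. -/
theorem isosceles_sectors_meet_at_midpoint (a b₁ b₂ : EuclideanSpace ℝ (Fin 2))
    (α A L : ℝ) (hα0 : 0 < α) (hα3 : α ≤ π / 3)
    (hA : A = 1 / (2 * (1 + Real.cos α)))
    (hs1 : dist a b₁ = A) (hs2 : dist a b₂ = A)
    (hang1 : EuclideanGeometry.angle a b₁ b₂ = α)
    (hang2 : EuclideanGeometry.angle a b₂ b₁ = α)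
    (hper : dist b₁ b₂ + dist a b₁ + dist a b₂ = 1)
    (hL : L = A * Real.cos α) :
    1 / 6 ≤ L ∧
    (Metric.closedBall b₁ L ∩
        convexHull ℝ ({a, b₁, b₂} : Set (EuclideanSpace ℝ (Fin 2)))) ∩
      (Metric.closedBall b₂ L ∩
        convexHull ℝ ({a, b₁, b₂} : Set (EuclideanSpace ℝ (Fin 2))))
      = {midpoint ℝ b₁ b₂} := by

  have hc : (1:ℝ)/2 ≤ Real.cos α := by
    have := Real.cos_le_cos_of_nonneg_of_le_pi (by positivity) (by linarith [Real.pi_pos]) hα3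
    rwa [Real.cos_pi_div_three] at this
  have hcpos : (0:ℝ) < Real.cos α := by linarith
  have h1c : (0:ℝ) < 1 + Real.cos α := by linarith
  have hLval : L = Real.cos α / (2 * (1 + Real.cos α)) := by
    rw [hL, hA]; ring
  have hL6 : 1/6 ≤ L := by
    rw [hLval, le_div_iff₀ (by positivity)]; nlinarith
  have hLpos : 0 < L := by linarith
  have hbb : dist b₁ b₂ = 2 * L := by
    have : dist b₁ b₂ = 1 - 2 * A := by linarith [hper, hs1, hs2]
    rw [this, hA, hLval]; field_simp; ring
  refine ⟨hL6, ?_⟩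
  ext x
  simp only [Set.mem_inter_iff, Set.mem_singleton_iff, Metric.mem_closedBall]
  constructor
  · rintro ⟨⟨hx1, -⟩, ⟨hx2, -⟩⟩
    have htri := dist_triangle b₁ x b₂
    rw [hbb] at htri
    rw [dist_comm] at hx1
    have e1 : dist b₁ x = L := by linarith
    have e2 : dist x b₂ = L := by linarith
    have := eq_midpoint_of_dist_eq_half (x := b₁) (y := x) (z := b₂)
      (by rw [e1, hbb]; ring) (by rw [e2, hbb]; ring)
    exact this
  · rintro rfl
    have hb1 : b₁ ∈ convexHull ℝ ({a, b₁, b₂} : Set (EuclideanSpace ℝ (Fin 2))) :=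
      subset_convexHull ℝ _ (by simp)
    have hb2 : b₂ ∈ convexHull ℝ ({a, b₁, b₂} : Set (EuclideanSpace ℝ (Fin 2))) :=
      subset_convexHull ℝ _ (by simp)
    have hmem : midpoint ℝ b₁ b₂ ∈ convexHull ℝ ({a, b₁, b₂} : Set (EuclideanSpace ℝ (Fin 2))) :=
      (convex_convexHull ℝ _).segment_subset hb1 hb2 (midpoint_mem_segment b₁ b₂)
    refine ⟨⟨?_, hmem⟩, ⟨?_, hmem⟩⟩
    · rw [dist_comm, dist_left_midpoint (𝕜 := ℝ), hbb]
      rw [Real.norm_two]; norm_num; linarith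
    · rw [dist_comm, dist_right_midpoint (𝕜 := ℝ), hbb]
      rw [Real.norm_two]; norm_num; linarith
end

section
/- A convex quadrilateral is uniquely determined up to congruence by its four interior angles (in cyclic order), the length of one specified side, and its perimeter: if two convex quadrilaterals have the same cyclically labeled interior angles, the same length for a corresponding side, and equal perimeters, then they are congruent. -/
/-!
Identify the plane with `ℂ`. At each vertex of a convex quadrilateral the edge direction turns
left by `π` minus the interior angle, so equal angles force the edges of the two quadrilaterals
to point in the same directions up to one rotation `μ`. Both edge sequences close up, so with
unit directions `uⱼ` and edge lengths `ℓⱼ`, `ℓ'ⱼ` we get `∑ (ℓⱼ - ℓ'ⱼ) • uⱼ = 0`, where the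
coefficients sum to zero (equal perimeters) and the one of the given side vanishes. The other
three directions are distinct points of the unit circle, hence affinely independent, so all edge
lengths agree and the quadrilaterals differ by the rotation `μ` and a translation.
-/

open Real EuclideanGeometry

/-- The cross product of two planar vectors. -/
def cross2 (a b : EuclideanSpace ℝ (Fin 2)) : ℝ := a 0 * b 1 - a 1 * b 0

/-- `v` lists the vertices of a convex polygon in counterclockwise cyclic order. -/
def IsConvexPolygon {n : ℕ} [NeZero n] (v : Fin n → EuclideanSpace ℝ (Fin 2)) : Prop :=
  (∀ i j : Fin n, 0 ≤ cross2 (v (i + 1) - v i) (v j - v i)) ∧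
  (∀ i : Fin n, 0 < cross2 (v (i + 1) - v i) (v (i + 2) - v (i + 1)))

namespace Complex

theorem div_eq_norm_mul_exp_angle {x y : ℂ} (h : 0 < (x / y).im) :
    x / y = ‖x / y‖ * exp (InnerProductGeometry.angle x y * I) := by
  have hx : x ≠ 0 := by rintro rfl; simp at h
  have hy : y ≠ 0 := by rintro rfl; simp at h
  rw [angle_eq_abs_arg hx hy, abs_of_nonneg (arg_nonneg_iff.2 h.le), norm_mul_exp_arg_mul_I]

theorem sameRay_mul_of_angle_eq {μ x y x' y' : ℂ} (h : 0 < (x / y).im) (h' : 0 < (x' / y').im)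
    (hangle : InnerProductGeometry.angle x y = InnerProductGeometry.angle x' y')
    (hy : SameRay ℝ y' (μ * y)) : SameRay ℝ x' (μ * x) := by
  have hy0 : y ≠ 0 := by rintro rfl; simp at h
  have hy'0 : y' ≠ 0 := by rintro rfl; simp at h'
  have hn' : 0 < ‖x' / y'‖ := norm_pos_iff.2 fun h0 => by simp [h0] at h'
  obtain ⟨r, hr, hry⟩ := hy.exists_nonneg_left hy'0
  have hx : x = ‖x / y‖ * exp (InnerProductGeometry.angle x' y' * I) * y := by
    rw [← hangle, ← div_eq_norm_mul_exp_angle h, div_mul_cancel₀ _ hy0]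
  have hx' : x' = ‖x' / y'‖ * exp (InnerProductGeometry.angle x' y' * I) * y' := by
    rw [← div_eq_norm_mul_exp_angle h', div_mul_cancel₀ _ hy'0]
  have : μ * x = (‖x / y‖ * r / ‖x' / y'‖) • x' := by
    rw [real_smul] at hry ⊢
    generalize exp (InnerProductGeometry.angle x' y' * I) = E at hx hx'
    generalize ‖x / y‖ = a at hx ⊢
    generalize ‖x' / y'‖ = a' at hx' hn' ⊢
    subst hx hx'
    have : (a' : ℂ) ≠ 0 := mod_cast hn'.ne'
    push_cast
    field_simp
    linear_combination (-(a * E)) * hry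
  rw [this]
  exact SameRay.sameRay_nonneg_smul_right x' (by positivity)

theorem exists_sameRay_mul_of_angle_eq {n : ℕ} {e e' : Fin (n + 1) → ℂ}
    (hturn : ∀ j, 0 < (e (j + 1) / e j).im) (hturn' : ∀ j, 0 < (e' (j + 1) / e' j).im)
    (hangle : ∀ j, InnerProductGeometry.angle (e (j + 1)) (e j) =
      InnerProductGeometry.angle (e' (j + 1)) (e' j)) :
    ∃ μ : Circle, ∀ j, SameRay ℝ (e' j) (μ * e j) := by
  have he : e 0 ≠ 0 := by intro h0; simpa [h0] using hturn 0
  set μ := Circle.exp (arg (e' 0 / e 0)) with hμ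
  refine ⟨μ, fun j => ?_⟩
  induction j using Fin.induction with
  | zero =>
    have : e' 0 = ‖e' 0 / e 0‖ • (μ * e 0) := by
      rw [hμ, Circle.coe_exp, real_smul, ← mul_assoc, norm_mul_exp_arg_mul_I, div_mul_cancel₀ _ he]
    rw [this]
    exact SameRay.sameRay_nonneg_smul_left _ (norm_nonneg _)
  | succ i ih =>
    rw [← Fin.coeSucc_eq_succ]
    exact sameRay_mul_of_angle_eq (hturn _) (hturn' _) (hangle _) ih

theorem not_sameRay_of_im_div_pos {x y : ℂ} (h : 0 < (y / x).im) : ¬SameRay ℝ x y := by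
  intro hxy
  have := arg_eq_zero_iff.1 (sameRay_iff_arg_div_eq_zero.1 hxy.symm)
  linarith [this.2]

theorem not_sameRay_of_im_div_pos_of_im_div_pos {x y z : ℂ} (hxy : 0 < (y / x).im)
    (hyz : 0 < (z / y).im) : ¬SameRay ℝ x z := by
  intro hxz
  have hx : x ≠ 0 := by rintro rfl; simp at hxy
  have hy : y ≠ 0 := by rintro rfl; simp at hyz
  obtain ⟨hre, him⟩ := arg_eq_zero_iff.1 (sameRay_iff_arg_div_eq_zero.1 hxz.symm)
  have hxy' : (x / y).im < 0 := by
    rw [← inv_div, inv_im, neg_div]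
    exact neg_neg_of_pos (div_pos hxy (normSq_pos.2 (div_ne_zero hy hx)))
  have : z / y = z / x * (x / y) := by field_simp
  rw [this, mul_im, him, zero_mul, add_zero] at hyz
  linarith [mul_nonpos_of_nonneg_of_nonpos hre hxy'.le]

end Complex

section InnerProductSpace

variable {V : Type*} [NormedAddCommGroup V] [InnerProductSpace ℝ V]

theorem affineIndependent_inv_norm_smul {x : Fin 3 → V} (hne : ∀ i, x i ≠ 0)
    (h01 : ¬SameRay ℝ (x 0) (x 1)) (h12 : ¬SameRay ℝ (x 1) (x 2))
    (h02 : ¬SameRay ℝ (x 0) (x 2)) : AffineIndependent ℝ fun i => ‖x i‖⁻¹ • x i := by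
  refine Cospherical.affineIndependent ⟨0, 1, ?_⟩ subset_rfl fun i j h => ?_
  · rintro _ ⟨i, rfl⟩
    simp [norm_smul, hne i]
  · have hij := (sameRay_iff_inv_norm_smul_eq_of_ne (hne i) (hne j)).2 h
    fin_cases i <;> fin_cases j
    all_goals first
      | rfl
      | exact absurd hij ‹_›
      | exact absurd hij.symm ‹_›

theorem eq_of_forall_sameRay_of_sum_norm_eq {e f : Fin 4 → V} (he : ∑ j, e j = 0)
    (hf : ∑ j, f j = 0) (hray : ∀ j, SameRay ℝ (f j) (e j)) (h12 : ¬SameRay ℝ (e 1) (e 2))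
    (h23 : ¬SameRay ℝ (e 2) (e 3)) (h13 : ¬SameRay ℝ (e 1) (e 3)) (h0 : ‖f 0‖ = ‖e 0‖)
    (hper : ∑ j, ‖f j‖ = ∑ j, ‖e j‖) : f = e := by
  have hne : ∀ i : Fin 3, e i.succ ≠ 0 := by
    intro i h
    fin_cases i
    · exact h12 (h ▸ SameRay.zero_left _)
    · exact h23 (h ▸ SameRay.zero_left _)
    · exact h23 (h ▸ SameRay.zero_right _)
  set u : Fin 3 → V := fun i => ‖e i.succ‖⁻¹ • e i.succ with hu
  have hf0 : f 0 = e 0 := (hray 0).eq_of_norm_eq h0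
  have hsmul (i : Fin 3) : e i.succ - f i.succ = (‖e i.succ‖ - ‖f i.succ‖) • u i := by
    apply smul_right_injective V (norm_ne_zero_iff.2 (hne i))
    dsimp only [hu]
    rw [smul_sub, ← (hray i.succ).norm_smul_eq, ← sub_smul, smul_smul, smul_smul]
    congr 1
    field_simp [norm_ne_zero_iff.2 (hne i)]
  have hsum : ∑ i : Fin 3, (‖e i.succ‖ - ‖f i.succ‖) = 0 := by
    rw [Fin.sum_univ_succ, Fin.sum_univ_succ (f := fun j => ‖e j‖), h0] at hper
    rw [Finset.sum_sub_distrib]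
    linarith
  have hcomb : ∑ i : Fin 3, (‖e i.succ‖ - ‖f i.succ‖) • u i = 0 := by
    rw [Fin.sum_univ_succ, hf0] at hf
    rw [Fin.sum_univ_succ] at he
    simp_rw [← hsmul, Finset.sum_sub_distrib]
    rw [eq_neg_of_add_eq_zero_right he, eq_neg_of_add_eq_zero_right hf, sub_self]
  have hd := (affineIndependent_iff_of_fintype ℝ u).1
    (affineIndependent_inv_norm_smul hne h12 h23 h13) _ hsum
    (by rwa [Finset.weightedVSub_eq_linear_combination _ hsum])
  funext j
  cases j using Fin.cases with
  | zero => exact hf0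
  | succ i => exact (hray i.succ).eq_of_norm_eq (by linarith [hd i])

theorem EuclideanGeometry.angle_eq_pi_sub_angle_sub (a b c : V) :
    ∠ a b c = π - InnerProductGeometry.angle (c - b) (b - a) := by
  rw [EuclideanGeometry.angle, vsub_eq_sub, vsub_eq_sub, ← neg_sub b a,
    InnerProductGeometry.angle_neg_left, InnerProductGeometry.angle_comm]

end InnerProductSpace

theorem Fin.sum_add_one_sub_eq_zero {M : Type*} [AddCommGroup M] {n : ℕ} [NeZero n]
    (v : Fin n → M) : ∑ j, (v (j + 1) - v j) = 0 := by
  rw [Finset.sum_sub_distrib, sub_eq_zero]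
  exact Equiv.sum_comp (Equiv.addRight (1 : Fin n)) v

theorem cross2_orthonormalBasisOneI_repr (a b : ℂ) :
    cross2 (Complex.orthonormalBasisOneI.repr a) (Complex.orthonormalBasisOneI.repr b) =
      Complex.normSq a * (b / a).im := by
  rcases eq_or_ne a 0 with rfl | ha
  · simp [cross2]
  · have : Complex.normSq a ≠ 0 := (Complex.normSq_pos.2 ha).ne'
    simp [cross2, Complex.div_im]
    field_simp

theorem IsConvexPolygon.im_div_pos {n : ℕ} [NeZero n] {u : Fin n → ℂ}
    (hu : IsConvexPolygon (Complex.orthonormalBasisOneI.repr ∘ u)) (i : Fin n) :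
    0 < ((u (i + 2) - u (i + 1)) / (u (i + 1) - u i)).im := by
  have := hu.2 i
  simp only [Function.comp_apply, ← map_sub, cross2_orthonormalBasisOneI_repr] at this
  exact pos_of_mul_pos_right this (Complex.normSq_nonneg _)

theorem angle_orthonormalBasisOneI_repr (p₁ p₂ p₃ : ℂ) :
    ∠ (Complex.orthonormalBasisOneI.repr p₁) (Complex.orthonormalBasisOneI.repr p₂)
      (Complex.orthonormalBasisOneI.repr p₃) = ∠ p₁ p₂ p₃ :=
  Complex.orthonormalBasisOneI.repr.toLinearIsometry.toAffineIsometry.angle_map p₁ p₂ p₃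

namespace Complex

theorem exists_isometryEquiv_of_sub_eq_mul_sub {n : ℕ} {v w : Fin (n + 1) → ℂ} (μ : Circle)
    (h : ∀ j, w (j + 1) - w j = μ * (v (j + 1) - v j)) : ∃ f : ℂ ≃ᵢ ℂ, ∀ j, f (v j) = w j := by
  have hconst (j : Fin (n + 1)) : w j - μ * v j = w 0 - μ * v 0 := by
    induction j using Fin.induction with
    | zero => rfl
    | succ i ih =>
      rw [← ih, ← Fin.coeSucc_eq_succ]
      linear_combination h i.castSucc
  refine ⟨(rotation μ).toIsometryEquiv.trans (IsometryEquiv.addRight (w 0 - μ * v 0)), fun j => ?_⟩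
  simp [rotation_apply, ← hconst j]

theorem exists_isometryEquiv_of_angle_eq_of_perimeter_eq (v w : Fin 4 → ℂ)
    (hv : ∀ i, 0 < ((v (i + 2) - v (i + 1)) / (v (i + 1) - v i)).im)
    (hw : ∀ i, 0 < ((w (i + 2) - w (i + 1)) / (w (i + 1) - w i)).im)
    (hang : ∀ j, ∠ (v (j - 1)) (v j) (v (j + 1)) = ∠ (w (j - 1)) (w j) (w (j + 1)))
    (hside : dist (v 0) (v 1) = dist (w 0) (w 1))
    (hper : ∑ j, dist (v j) (v (j + 1)) = ∑ j, dist (w j) (w (j + 1))) :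
    ∃ f : ℂ ≃ᵢ ℂ, ∀ j, f (v j) = w j := by
  set e : Fin 4 → ℂ := fun j => v (j + 1) - v j with he
  set e' : Fin 4 → ℂ := fun j => w (j + 1) - w j with he'
  have two : (1 + 1 : Fin 4) = 2 := rfl
  have hturn (j : Fin 4) : 0 < (e (j + 1) / e j).im := by
    simpa only [he, add_assoc, two] using hv j
  have hturn' (j : Fin 4) : 0 < (e' (j + 1) / e' j).im := by
    simpa only [he', add_assoc, two] using hw j
  have hangle (j : Fin 4) : InnerProductGeometry.angle (e (j + 1)) (e j) =
      InnerProductGeometry.angle (e' (j + 1)) (e' j) := by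
    have := hang (j + 1)
    rw [angle_eq_pi_sub_angle_sub, angle_eq_pi_sub_angle_sub, add_sub_cancel_right] at this
    linarith
  obtain ⟨μ, hμ⟩ := exists_sameRay_mul_of_angle_eq hturn hturn' hangle
  have hedge : (fun j => μ * e j) = e' := by
    apply eq_of_forall_sameRay_of_sum_norm_eq (Fin.sum_add_one_sub_eq_zero w)
    · rw [← Finset.mul_sum, Fin.sum_add_one_sub_eq_zero v, mul_zero]
    · exact fun j => (hμ j).symm
    · exact not_sameRay_of_im_div_pos (hturn' 1)
    · exact not_sameRay_of_im_div_pos (hturn' 2)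
    · exact not_sameRay_of_im_div_pos_of_im_div_pos (hturn' 1) (hturn' 2)
    · simpa [dist_eq_norm', he, he', Circle.norm_coe] using hside
    · simpa [dist_eq_norm', he, he', Circle.norm_coe] using hper
  exact exists_isometryEquiv_of_sub_eq_mul_sub μ fun j => (congrFun hedge j).symm

end Complex

/-- A convex quadrilateral is determined up to congruence by its four interior
angles (in cyclic order), the length of one specified side, and its perimeter. -/
theorem convex_quadrilateral_congruent (v w : Fin 4 → EuclideanSpace ℝ (Fin 2))
    (hv : IsConvexPolygon v) (hw : IsConvexPolygon w)
    (hang : ∀ j : Fin 4,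
      EuclideanGeometry.angle (v (j - 1)) (v j) (v (j + 1)) =
        EuclideanGeometry.angle (w (j - 1)) (w j) (w (j + 1)))
    (hside : dist (v 0) (v 1) = dist (w 0) (w 1))
    (hper : ∑ j : Fin 4, dist (v j) (v (j + 1)) = ∑ j : Fin 4, dist (w j) (w (j + 1))) :
    ∃ f : EuclideanSpace ℝ (Fin 2) ≃ᵢ EuclideanSpace ℝ (Fin 2), ∀ j, f (v j) = w j := by
  let φ := Complex.orthonormalBasisOneI.repr
  obtain ⟨v, rfl⟩ := φ.surjective.comp_left v
  obtain ⟨w, rfl⟩ := φ.surjective.comp_left w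
  simp only [Function.comp_apply, φ, angle_orthonormalBasisOneI_repr,
    LinearIsometryEquiv.dist_map] at hang hside hper
  obtain ⟨f, hf⟩ := Complex.exists_isometryEquiv_of_angle_eq_of_perimeter_eq v w hv.im_div_pos
    hw.im_div_pos hang hside hper
  exact ⟨φ.symm.toIsometryEquiv.trans (f.trans φ.toIsometryEquiv), fun j => by simp [φ, hf]⟩
end
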